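/- arXiv:1001.3129 — 3 statements merged into one kernel-verified Lean document; each statement's English description precedes it below -/
import Mathlib

section
/- For all bounded functions u : H → ℝ and all s, t ≥ 0, the sup-convolution operators satisfy Ť_t (Ť_s u) = Ť_{t+s} u, where Ť_t u(x) = sup_y (u(y) - ‖y - x‖²/t). -/
/-!
The weight `‖v‖² / t` is convex in `(v, t)` and positively homogeneous, so
`‖a + b‖² / (s + t) ≤ ‖a‖² / s + ‖b‖² / t` (Sedrakyan's inequality after the triangle inequality),
with equality when `a` and `b` are the pieces of `z - x` cut at the point of the segment `[x, z]`
dividing it in the ratio `t : s`. Hence `Ť_t (Ť_s u) (x) = sup_{y,z} (u z - ‖z - y‖²/s - ‖y - x‖²/t)`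
is at most `Ť_{t+s} u (x)`, and choosing `y` on the segment attains every term of `Ť_{t+s} u (x)`.
-/

noncomputable def supConv {H : Type*} [NormedAddCommGroup H] [InnerProductSpace ℝ H]
    (t : ℝ) (u : H → ℝ) (x : H) : ℝ :=
  if t = 0 then u x else ⨆ y : H, (u y - ‖y - x‖ ^ 2 / t)

open Set AffineMap

section Norms

variable {E : Type*} [SeminormedAddCommGroup E] {s t : ℝ}

lemma add_sq_div_add_le (a b : ℝ) (hs : 0 < s) (ht : 0 < t) :
    (a + b) ^ 2 / (s + t) ≤ a ^ 2 / s + b ^ 2 / t := by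
  simpa [Fin.sum_univ_two] using
    Finset.univ.sq_sum_div_le_sum_sq_div ![a, b] (g := ![s, t]) (by simp [Fin.forall_fin_two, hs, ht])

lemma sq_norm_add_div_add_le (a b : E) (hs : 0 < s) (ht : 0 < t) :
    ‖a + b‖ ^ 2 / (s + t) ≤ ‖a‖ ^ 2 / s + ‖b‖ ^ 2 / t :=
  calc ‖a + b‖ ^ 2 / (s + t) ≤ (‖a‖ + ‖b‖) ^ 2 / (s + t) := by gcongr; exact norm_add_le a b
    _ ≤ ‖a‖ ^ 2 / s + ‖b‖ ^ 2 / t := add_sq_div_add_le _ _ hs ht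

lemma sq_norm_sub_lineMap_div_add_sq_norm_lineMap_sub_div [NormedSpace ℝ E] (x z : E)
    (hs : 0 < s) (ht : 0 < t) :
    ‖z - lineMap x z (t / (s + t))‖ ^ 2 / s + ‖lineMap x z (t / (s + t)) - x‖ ^ 2 / t =
      ‖z - x‖ ^ 2 / (s + t) := by
  have h1 : 1 - t / (s + t) = s / (s + t) := by field_simp; ring
  rw [← vsub_eq_sub z, right_vsub_lineMap, ← vsub_eq_sub _ x, lineMap_vsub_left, h1,
    vsub_eq_sub, norm_smul, norm_smul, Real.norm_of_nonneg (by positivity),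
    Real.norm_of_nonneg (by positivity)]
  field_simp

lemma bddAbove_range_sub_sq_norm_div {u : E → ℝ} (hu : BddAbove (range u)) (ht : 0 ≤ t) (x : E) :
    BddAbove (range fun y ↦ u y - ‖y - x‖ ^ 2 / t) := by
  obtain ⟨C, hC⟩ := hu
  refine ⟨C, forall_mem_range.2 fun y ↦ ?_⟩
  have := hC (mem_range_self y)
  have : 0 ≤ ‖y - x‖ ^ 2 / t := by positivity
  linarith

end Norms

section SupConv

variable {H : Type*} [NormedAddCommGroup H] [InnerProductSpace ℝ H] {u : H → ℝ} {t : ℝ}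

lemma supConv_zero (u : H → ℝ) : supConv 0 u = u := by
  funext x
  simp [supConv]

lemma le_supConv (hu : BddAbove (range u)) (ht : 0 < t) (x y : H) :
    u y - ‖y - x‖ ^ 2 / t ≤ supConv t u x := by
  rw [supConv, if_neg ht.ne']
  exact le_ciSup (bddAbove_range_sub_sq_norm_div hu ht.le x) y

lemma supConv_le {x : H} {c : ℝ} (ht : 0 < t) (h : ∀ y, u y - ‖y - x‖ ^ 2 / t ≤ c) :
    supConv t u x ≤ c := by
  rw [supConv, if_neg ht.ne']
  exact ciSup_le h

lemma bddAbove_range_supConv (hu : BddAbove (range u)) (ht : 0 ≤ t) :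
    BddAbove (range (supConv t u)) := by
  rcases ht.eq_or_lt with rfl | ht
  · rwa [supConv_zero]
  obtain ⟨C, hC⟩ := hu
  refine ⟨C, forall_mem_range.2 fun x ↦ supConv_le ht fun y ↦ ?_⟩
  have := hC (mem_range_self y)
  have : 0 ≤ ‖y - x‖ ^ 2 / t := by positivity
  linarith

end SupConv

theorem supConv_semigroup {H : Type*} [NormedAddCommGroup H] [InnerProductSpace ℝ H]
    (u : H → ℝ) (hu : ∃ C : ℝ, ∀ x, |u x| ≤ C)
    (s t : ℝ) (hs : 0 ≤ s) (ht : 0 ≤ t) :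
    supConv t (supConv s u) = supConv (t + s) u := by
  obtain ⟨C, hC⟩ := hu
  have hu : BddAbove (range u) := ⟨C, forall_mem_range.2 fun x ↦ (le_abs_self _).trans (hC x)⟩
  rcases ht.eq_or_lt with rfl | ht
  · rw [supConv_zero, zero_add]
  rcases hs.eq_or_lt with rfl | hs
  · rw [supConv_zero, add_zero]
  rw [add_comm t s]
  funext x
  apply le_antisymm
  · refine supConv_le ht fun y ↦ sub_le_iff_le_add.2 <| supConv_le hs fun z ↦ ?_
    have hsup := le_supConv hu (add_pos hs ht) x z
    have hcost := sq_norm_add_div_add_le (z - y) (y - x) hs ht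
    rw [sub_add_sub_cancel] at hcost
    linarith
  · refine supConv_le (add_pos hs ht) fun z ↦ ?_
    set y := lineMap x z (t / (s + t))
    calc u z - ‖z - x‖ ^ 2 / (s + t) = u z - ‖z - y‖ ^ 2 / s - ‖y - x‖ ^ 2 / t := by
          rw [← sq_norm_sub_lineMap_div_add_sq_norm_lineMap_sub_div x z hs ht]; ring
      _ ≤ supConv s u y - ‖y - x‖ ^ 2 / t := by gcongr; exact le_supConv hu hs y z
      _ ≤ supConv t (supConv s u) x := le_supConv (bddAbove_range_supConv hu hs.le) ht x y
end

section
/- If u : H → ℝ is bounded and k-semi-convex, then for every 0 < t < k the function T_t u is (k - t)-semi-convex. -/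
/-!
Completing the square gives, with `α = (k - t) / k` and `c = k / (t (k - t))`,
`‖y - x‖² / t + ‖x‖² / (k - t) = ‖y‖² / k + c ‖α • y - x‖²`,
so `T_t u x + ‖x‖² / (k - t)` is the infimum over `y` of `(u y + ‖y‖² / k) + c ‖α • y - x‖²`.
When `u` is `k`-semi-convex this is jointly convex in `(x, y)`, and partial infima of jointly
convex functions are convex.
-/

noncomputable def infConv {H : Type*} [NormedAddCommGroup H] [InnerProductSpace ℝ H]
    (t : ℝ) (u : H → ℝ) (x : H) : ℝ :=
  if t = 0 then u x else ⨅ y : H, (u y + ‖y - x‖ ^ 2 / t)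

open Set

theorem ConvexOn.ciInf_of_uncurry {E G : Type*} [AddCommGroup E] [Module ℝ E]
    [AddCommGroup G] [Module ℝ G] [Nonempty G] {F : E → G → ℝ}
    (hF : ConvexOn ℝ univ (Function.uncurry F)) (hbdd : ∀ x, BddBelow (range (F x))) :
    ConvexOn ℝ univ fun x => ⨅ y, F x y := by
  refine ⟨convex_univ, fun x₁ _ x₂ _ a b ha hb hab => le_of_forall_pos_le_add fun ε hε => ?_⟩
  obtain ⟨y₁, hy₁⟩ := exists_lt_of_ciInf_lt (lt_add_of_pos_right (⨅ y, F x₁ y) hε)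
  obtain ⟨y₂, hy₂⟩ := exists_lt_of_ciInf_lt (lt_add_of_pos_right (⨅ y, F x₂ y) hε)
  calc ⨅ y, F (a • x₁ + b • x₂) y
      ≤ Function.uncurry F (a • (x₁, y₁) + b • (x₂, y₂)) := ciInf_le (hbdd _) (a • y₁ + b • y₂)
    _ ≤ a * F x₁ y₁ + b * F x₂ y₂ := hF.2 (mem_univ _) (mem_univ _) ha hb hab
    _ ≤ a * ((⨅ y, F x₁ y) + ε) + b * ((⨅ y, F x₂ y) + ε) := by gcongr
    _ = a * (⨅ y, F x₁ y) + b * (⨅ y, F x₂ y) + ε := by linear_combination ε * hab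

theorem convexOn_univ_norm_sq {E : Type*} [SeminormedAddCommGroup E] [NormedSpace ℝ E] :
    ConvexOn ℝ univ fun x : E => ‖x‖ ^ 2 :=
  convexOn_univ_norm.pow (fun x _ => norm_nonneg x) 2

theorem ConvexOn.uncurry_add_mul_norm_sq_smul_sub {E : Type*} [SeminormedAddCommGroup E]
    [NormedSpace ℝ E] {v : E → ℝ} (hv : ConvexOn ℝ univ v) {c : ℝ} (hc : 0 ≤ c) (α : ℝ) :
    ConvexOn ℝ univ (Function.uncurry fun x y : E => v y + c * ‖α • y - x‖ ^ 2) :=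
  (hv.comp_linearMap (LinearMap.snd ℝ E E)).add <|
    (convexOn_univ_norm_sq.comp_linearMap (α • LinearMap.snd ℝ E E - LinearMap.fst ℝ E E)).smul hc

theorem norm_sub_sq_div_add_norm_sq_div {H : Type*} [NormedAddCommGroup H]
    [InnerProductSpace ℝ H] {t k : ℝ} (ht : t ≠ 0) (hk : k ≠ 0) (hkt : k - t ≠ 0) (x y : H) :
    ‖y - x‖ ^ 2 / t + ‖x‖ ^ 2 / (k - t)
      = ‖y‖ ^ 2 / k + k / (t * (k - t)) * ‖((k - t) / k) • y - x‖ ^ 2 := by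
  rw [norm_sub_sq_real, norm_sub_sq_real, real_inner_smul_left, norm_smul, Real.norm_eq_abs,
    mul_pow, sq_abs]
  field_simp
  ring

theorem infConv_semiconvex {H : Type*} [NormedAddCommGroup H] [InnerProductSpace ℝ H]
    (u : H → ℝ) (hu : ∃ C : ℝ, ∀ x, |u x| ≤ C) (k : ℝ)
    (hk : ConvexOn ℝ Set.univ (fun x : H => u x + ‖x‖ ^ 2 / k))
    (t : ℝ) (ht : 0 < t) (htk : t < k) :
    ConvexOn ℝ Set.univ (fun x : H => infConv t u x + ‖x‖ ^ 2 / (k - t)) := by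
  obtain ⟨C, hC⟩ := hu
  have hk₀ : 0 < k := ht.trans htk
  have hkt : 0 < k - t := sub_pos.2 htk
  have hc : 0 ≤ k / (t * (k - t)) := by positivity
  let Φ : H → H → ℝ := fun x y =>
    u y + ‖y‖ ^ 2 / k + k / (t * (k - t)) * ‖((k - t) / k) • y - x‖ ^ 2
  have hΦ : ∀ x y, Φ x y = u y + ‖y - x‖ ^ 2 / t + ‖x‖ ^ 2 / (k - t) := fun x y => by
    rw [add_assoc, norm_sub_sq_div_add_norm_sq_div ht.ne' hk₀.ne' hkt.ne', ← add_assoc]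
  have hlow : ∀ x y : H, -C ≤ u y + ‖y - x‖ ^ 2 / t := fun x y => by
    have := neg_le_of_abs_le (hC y)
    have : 0 ≤ ‖y - x‖ ^ 2 / t := by positivity
    linarith
  have hbdd : ∀ x : H, BddBelow (range fun y => u y + ‖y - x‖ ^ 2 / t) := fun x =>
    ⟨-C, forall_mem_range.2 (hlow x)⟩
  have hbddΦ : ∀ x : H, BddBelow (range (Φ x)) := fun x =>
    ⟨-C, forall_mem_range.2 fun y => by
      have : 0 ≤ ‖x‖ ^ 2 / (k - t) := by positivity
      linarith [hΦ x y, hlow x y]⟩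
  have hrepr : (fun x => infConv t u x + ‖x‖ ^ 2 / (k - t)) = fun x => ⨅ y, Φ x y := by
    funext x
    rw [infConv, if_neg ht.ne', ← OrderIso.addRight_apply (‖x‖ ^ 2 / (k - t)),
      OrderIso.map_ciInf _ (hbdd x)]
    simp only [OrderIso.addRight_apply, hΦ]
  rw [hrepr]
  exact ConvexOn.ciInf_of_uncurry (hk.uncurry_add_mul_norm_sq_smul_sub hc _) hbddΦ
end

section
/- Let u ≥ v be bounded functions on a Hilbert space H such that u and -v are semi-concave. Then there exists a function w : H → ℝ with u ≥ w ≥ v such that w is Fréchet differentiable with Lipschitz gradient (C^{1,1}). -/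
/-!
Put `a = k₂⁻¹`, so that `V = v + a‖·‖²` is convex while `h = u + a‖·‖²` is still semiconcave
and has quadratic growth, and take `w = h** - a‖·‖²`, where `h**` is the Fenchel biconjugate
of `h`. Then `h** ≤ h` gives `w ≤ u`, and `V ≤ h**` because the convex continuous function
`V ≤ h` is a supremum of affine functions (affine minorants with slope `2τ(x₀ - z)` are
produced at proximal points `z`). Semiconcavity of `h` makes `h*` strongly convex, and
strong convexity of `h*` in turn makes `h**` semiconcave; on a complete space the supremum
defining `h**(x)` is attained, which gives `h**` a subgradient at every point. A convex
function with subgradients that is semiconcave obeys a two-sided quadratic Taylor bound,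
and such a bound forces `C^{1,1}`.
-/

open Set Filter Topology
open scoped RealInnerProductSpace

section

variable {H : Type*} [NormedAddCommGroup H] [InnerProductSpace ℝ H]

/-- Where the supremum is infinite the value is junk (`0`). -/
noncomputable def fenchelConjugate (f : H → ℝ) (p : H) : ℝ := ⨆ x, ⟪p, x⟫ - f x

def MidpointSemiconcave (L : ℝ) (f : H → ℝ) : Prop :=
  ∀ x d : H, f (x + d) + f (x - d) ≤ 2 * f x + L * ‖d‖ ^ 2

def StrongMidpointConvex (m : ℝ) (f : H → ℝ) : Prop :=
  ∀ x d : H, 2 * f x + m * ‖d‖ ^ 2 ≤ f (x + d) + f (x - d)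

theorem two_mul_inner_le_mul_norm_sq_add {m : ℝ} (hm : 0 < m) (d e : H) :
    2 * ⟪d, e⟫ ≤ m * ‖e‖ ^ 2 + ‖d‖ ^ 2 / m := by
  have h := norm_sub_sq_real d (m • e)
  rw [real_inner_smul_right, norm_smul, Real.norm_of_nonneg hm.le, mul_pow] at h
  have key : m * (2 * ⟪d, e⟫) ≤ m * (m * ‖e‖ ^ 2 + ‖d‖ ^ 2 / m) := by
    rw [mul_add, mul_div_cancel₀ _ hm.ne']
    nlinarith [sq_nonneg ‖d - m • e‖]
  exact le_of_mul_le_mul_left key hm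

theorem ConvexOn.two_mul_le_add_sub {f : H → ℝ} (hf : ConvexOn ℝ univ f) (x d : H) :
    2 * f x ≤ f (x + d) + f (x - d) := by
  have h := hf.2 (mem_univ (x + d)) (mem_univ (x - d)) (by norm_num : (0 : ℝ) ≤ 1 / 2)
    (by norm_num : (0 : ℝ) ≤ 1 / 2) (by norm_num)
  have hx : (1 / 2 : ℝ) • (x + d) + (1 / 2 : ℝ) • (x - d) = x := by module
  rw [hx, smul_eq_mul, smul_eq_mul] at h
  linarith

theorem ConcaveOn.midpointSemiconcave {f : H → ℝ} {k : ℝ}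
    (hf : ConcaveOn ℝ univ fun x => f x - ‖x‖ ^ 2 / k) : MidpointSemiconcave (2 / k) f := by
  intro x d
  have h := hf.neg.two_mul_le_add_sub x d
  simp only [Pi.neg_apply] at h
  linear_combination h + parallelogram_law_with_norm ℝ x d / k

theorem MidpointSemiconcave.add_mul_norm_sq {f : H → ℝ} {L : ℝ} (hf : MidpointSemiconcave L f)
    (a : ℝ) : MidpointSemiconcave (L + 2 * a) fun x => f x + a * ‖x‖ ^ 2 := by
  intro x d
  have hpar := parallelogram_law_with_norm ℝ x d
  linear_combination hf x d + a * hpar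

theorem ConvexOn.strongMidpointConvex_add_mul_norm_sub_sq {f : H → ℝ} (hf : ConvexOn ℝ univ f)
    (τ : ℝ) (x₀ : H) : StrongMidpointConvex (2 * τ) fun y => f y + τ * ‖y - x₀‖ ^ 2 := by
  intro x d
  dsimp only
  rw [show x + d - x₀ = x - x₀ + d by abel, show x - d - x₀ = x - x₀ - d by abel]
  linear_combination hf.two_mul_le_add_sub x d - τ * parallelogram_law_with_norm ℝ (x - x₀) d

theorem StrongMidpointConvex.sub_inner {f : H → ℝ} {m : ℝ} (hf : StrongMidpointConvex m f)
    (x : H) : StrongMidpointConvex m fun p => f p - ⟪x, p⟫ := by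
  intro p e
  have := hf p e
  simp only [inner_add_right, inner_sub_right]
  linarith

section Conjugate

variable {f : H → ℝ}

theorem inner_sub_le_fenchelConjugate {p : H} (hf : BddAbove (range fun x => ⟪p, x⟫ - f x))
    (x : H) : ⟪p, x⟫ - f x ≤ fenchelConjugate f p :=
  le_ciSup hf x

theorem fenchelConjugate_le {p : H} {c : ℝ} (h : ∀ x, ⟪p, x⟫ - f x ≤ c) :
    fenchelConjugate f p ≤ c :=
  ciSup_le h

theorem bddAbove_inner_sub_of_mul_norm_sq_sub_le {a C : ℝ} (ha : 0 < a)
    (hf : ∀ x, a * ‖x‖ ^ 2 - C ≤ f x) (p : H) : BddAbove (range fun x => ⟪p, x⟫ - f x) := by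
  refine ⟨C + ‖p‖ ^ 2 / (4 * a), ?_⟩
  rintro _ ⟨x, rfl⟩
  have h := two_mul_inner_le_mul_norm_sq_add (by positivity : 0 < 2 * a) p x
  have : ‖p‖ ^ 2 / (2 * a) = 2 * (‖p‖ ^ 2 / (4 * a)) := by field_simp; ring
  linarith [hf x]

theorem inner_sub_fenchelConjugate_le {p : H} (hf : BddAbove (range fun y => ⟪p, y⟫ - f y))
    (x : H) : ⟪x, p⟫ - fenchelConjugate f p ≤ f x := by
  have := inner_sub_le_fenchelConjugate hf x
  rw [real_inner_comm]
  linarith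

theorem fenchelConjugate_fenchelConjugate_le
    (hf : ∀ p, BddAbove (range fun x => ⟪p, x⟫ - f x)) (x : H) :
    fenchelConjugate (fenchelConjugate f) x ≤ f x :=
  fenchelConjugate_le fun p => inner_sub_fenchelConjugate_le (hf p) x

theorem bddAbove_inner_sub_fenchelConjugate
    (hf : ∀ p, BddAbove (range fun x => ⟪p, x⟫ - f x)) (x : H) :
    BddAbove (range fun p => ⟪x, p⟫ - fenchelConjugate f p) :=
  ⟨f x, by rintro _ ⟨p, rfl⟩; exact inner_sub_fenchelConjugate_le (hf p) x⟩

theorem inner_add_le_fenchelConjugate_fenchelConjugate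
    (hf : ∀ p, BddAbove (range fun x => ⟪p, x⟫ - f x)) {p : H} {c : ℝ}
    (hp : ∀ y, ⟪p, y⟫ + c ≤ f y) (x : H) :
    ⟪p, x⟫ + c ≤ fenchelConjugate (fenchelConjugate f) x := by
  have h₁ : fenchelConjugate f p ≤ -c := fenchelConjugate_le fun y => by linarith [hp y]
  have h₂ := inner_sub_le_fenchelConjugate (bddAbove_inner_sub_fenchelConjugate hf x) p
  rw [real_inner_comm]
  linarith

theorem lowerSemicontinuous_fenchelConjugate
    (hf : ∀ p, BddAbove (range fun x => ⟪p, x⟫ - f x)) : LowerSemicontinuous (fenchelConjugate f) :=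
  lowerSemicontinuous_ciSup hf fun _ =>
    ((continuous_id.inner continuous_const).sub continuous_const).lowerSemicontinuous

theorem bddBelow_fenchelConjugate_sub_inner
    (hf : ∀ p, BddAbove (range fun x => ⟪p, x⟫ - f x)) {a C : ℝ} (ha : 0 < a)
    (hf' : ∀ x, f x ≤ a * ‖x‖ ^ 2 + C) (x : H) :
    BddBelow (range fun p => fenchelConjugate f p - ⟪x, p⟫) := by
  refine ⟨-C - a * ‖x‖ ^ 2, ?_⟩
  rintro _ ⟨p, rfl⟩
  -- test the supremum at the maximiser `p / (2a)` of `⟪p, y⟫ - a‖y‖²`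
  have h₁ := inner_sub_le_fenchelConjugate (hf p) ((2 * a)⁻¹ • p)
  have h₂ := two_mul_inner_le_mul_norm_sq_add (by positivity : 0 < (2 * a)⁻¹) x p
  rw [real_inner_smul_right, real_inner_self_eq_norm_sq] at h₁
  have h₃ := hf' ((2 * a)⁻¹ • p)
  rw [norm_smul, mul_pow, Real.norm_of_nonneg (by positivity)] at h₃
  have e₁ : a * ((2 * a)⁻¹ ^ 2 * ‖p‖ ^ 2) = (2 * a)⁻¹ * ‖p‖ ^ 2 / 2 := by field_simp
  have e₂ : ‖x‖ ^ 2 / (2 * a)⁻¹ = 2 * a * ‖x‖ ^ 2 := by field_simp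
  linarith

theorem MidpointSemiconcave.strongMidpointConvex_fenchelConjugate {L : ℝ} (hL : 0 < L)
    (hsc : MidpointSemiconcave L f)
    (hf : ∀ p, BddAbove (range fun x => ⟪p, x⟫ - f x)) :
    StrongMidpointConvex L⁻¹ (fenchelConjugate f) := by
  intro p e
  suffices ∀ x, ⟪p, x⟫ - f x ≤
      (fenchelConjugate f (p + e) + fenchelConjugate f (p - e) - L⁻¹ * ‖e‖ ^ 2) / 2 by
    linarith [fenchelConjugate_le this]
  intro x
  have h₁ := inner_sub_le_fenchelConjugate (hf (p + e)) (x + L⁻¹ • e)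
  have h₂ := inner_sub_le_fenchelConjugate (hf (p - e)) (x - L⁻¹ • e)
  have h := hsc x (L⁻¹ • e)
  simp only [inner_add_left, inner_sub_left, inner_add_right, inner_sub_right,
    real_inner_smul_right, real_inner_self_eq_norm_sq] at h₁ h₂
  rw [norm_smul, mul_pow, Real.norm_of_nonneg (inv_nonneg.2 hL.le)] at h
  have e₁ : L * (L⁻¹ ^ 2 * ‖e‖ ^ 2) = L⁻¹ * ‖e‖ ^ 2 := by field_simp
  linarith

end Conjugate

theorem StrongMidpointConvex.midpointSemiconcave_fenchelConjugate {g : H → ℝ} {m : ℝ}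
    (hm : 0 < m) (hsc : StrongMidpointConvex m g)
    (hg : ∀ x, BddAbove (range fun p => ⟪x, p⟫ - g p)) :
    MidpointSemiconcave m⁻¹ (fenchelConjugate g) := by
  intro x d
  have key : ∀ p₁ p₂, (⟪x + d, p₁⟫ - g p₁) + (⟪x - d, p₂⟫ - g p₂) ≤
      2 * fenchelConjugate g x + m⁻¹ * ‖d‖ ^ 2 := by
    intro p₁ p₂
    obtain ⟨p, e, rfl, rfl⟩ : ∃ p e : H, p₁ = p + e ∧ p₂ = p - e :=
      ⟨(1 / 2 : ℝ) • (p₁ + p₂), (1 / 2 : ℝ) • (p₁ - p₂), by module, by module⟩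
    have h₁ := hsc p e
    have h₂ := inner_sub_le_fenchelConjugate (hg x) p
    have h₃ := two_mul_inner_le_mul_norm_sq_add hm d e
    simp only [inner_add_left, inner_sub_left, inner_add_right, inner_sub_right]
    rw [div_eq_inv_mul] at h₃
    linarith
  have h : ∀ p₁, ⟪x + d, p₁⟫ - g p₁ ≤
      2 * fenchelConjugate g x + m⁻¹ * ‖d‖ ^ 2 - fenchelConjugate g (x - d) := fun p₁ => by
    have : fenchelConjugate g (x - d) ≤
        2 * fenchelConjugate g x + m⁻¹ * ‖d‖ ^ 2 - (⟪x + d, p₁⟫ - g p₁) :=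
      fenchelConjugate_le fun p₂ => by linarith [key p₁ p₂]
    linarith
  linarith [fenchelConjugate_le h]

theorem StrongMidpointConvex.exists_forall_le [CompleteSpace H] {F : H → ℝ} {m : ℝ} (hm : 0 < m)
    (hsc : StrongMidpointConvex m F) (hF : LowerSemicontinuous F) (hbdd : BddBelow (range F)) :
    ∃ z, ∀ y, F z ≤ F y := by
  set μ := ⨅ y, F y
  have hμ : ∀ y, μ ≤ F y := ciInf_le hbdd
  choose φ hφ using fun n : ℕ =>
    exists_lt_of_ciInf_lt (lt_add_of_pos_right μ (Nat.one_div_pos_of_nat (n := n)))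
  -- the midpoint of two almost minimisers forces them to be close
  have hclose : ∀ n k, m * ‖φ n - φ k‖ ^ 2 < 4 * (1 / (n + 1) + 1 / (k + 1)) := by
    intro n k
    have h := hsc ((1 / 2 : ℝ) • (φ n + φ k)) ((1 / 2 : ℝ) • (φ n - φ k))
    rw [show (1 / 2 : ℝ) • (φ n + φ k) + (1 / 2 : ℝ) • (φ n - φ k) = φ n by module,
      show (1 / 2 : ℝ) • (φ n + φ k) - (1 / 2 : ℝ) • (φ n - φ k) = φ k by module, norm_smul,
      mul_pow, Real.norm_of_nonneg (by norm_num)] at h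
    linarith [hμ ((1 / 2 : ℝ) • (φ n + φ k)), hφ n, hφ k]
  have hcauchy : CauchySeq φ := by
    refine Metric.cauchySeq_iff'.2 fun ε hε => ?_
    obtain ⟨N, hN⟩ := (tendsto_one_div_add_atTop_nhds_zero_nat.eventually
      (gt_mem_nhds (by positivity : 0 < m * ε ^ 2 / 8))).exists
    refine ⟨N, fun n hn => ?_⟩
    have h := hclose n N
    have := Nat.one_div_le_one_div (α := ℝ) hn
    rw [dist_eq_norm]
    exact lt_of_pow_lt_pow_left₀ 2 hε.le (lt_of_mul_lt_mul_left (by nlinarith) hm.le)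
  obtain ⟨z, hz⟩ := cauchySeq_tendsto_of_complete hcauchy
  have hFz : ∀ N : ℕ, F z ≤ μ + 1 / (N + 1) := fun N =>
    (hF.isClosed_preimage _).mem_of_tendsto hz <| eventually_atTop.2
      ⟨N, fun n hn => (hφ n).le.trans (by gcongr)⟩
  refine ⟨z, fun y => le_trans ?_ (hμ y)⟩
  exact ge_of_tendsto' (by simpa using tendsto_one_div_add_atTop_nhds_zero_nat.const_add μ) hFz

theorem StrongMidpointConvex.exists_fenchelConjugate_eq [CompleteSpace H] {g : H → ℝ} {m : ℝ}
    (hm : 0 < m) (hsc : StrongMidpointConvex m g) (hg : LowerSemicontinuous g) {x : H}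
    (hbdd : BddBelow (range fun p => g p - ⟪x, p⟫)) :
    ∃ p, fenchelConjugate g x = ⟪x, p⟫ - g p := by
  have hinner : Continuous fun p => -⟪x, p⟫ := by fun_prop
  have hlsc : LowerSemicontinuous fun p => g p - ⟪x, p⟫ := by
    simpa only [sub_eq_add_neg] using hg.add hinner.lowerSemicontinuous
  obtain ⟨p, hp⟩ := (hsc.sub_inner x).exists_forall_le hm hlsc hbdd
  refine ⟨p, le_antisymm (fenchelConjugate_le fun q => by linarith [hp q]) ?_⟩
  exact inner_sub_le_fenchelConjugate ⟨⟪x, p⟫ - g p, by rintro _ ⟨q, rfl⟩; linarith [hp q]⟩ p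

theorem fenchelConjugate_add_inner_le {g : H → ℝ} {x p : H}
    (hp : fenchelConjugate g x = ⟪x, p⟫ - g p) {y : H}
    (hy : BddAbove (range fun q => ⟪y, q⟫ - g q)) :
    fenchelConjugate g x + ⟪p, y - x⟫ ≤ fenchelConjugate g y := by
  have := inner_sub_le_fenchelConjugate hy p
  rw [hp, inner_sub_right, real_inner_comm y p, real_inner_comm x p]
  linarith

theorem MidpointSemiconcave.le_add_inner_add {f : H → ℝ} {L : ℝ} (hsc : MidpointSemiconcave L f)
    {x p : H} (hp : ∀ y, f x + ⟪p, y - x⟫ ≤ f y) (y : H) :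
    f y ≤ f x + ⟪p, y - x⟫ + L * ‖y - x‖ ^ 2 := by
  have h₁ := hsc x (y - x)
  have h₂ := hp (x - (y - x))
  rw [add_sub_cancel] at h₁
  rw [sub_sub_cancel_left, inner_neg_right] at h₂
  linarith

theorem exists_inner_bounds_fenchelConjugate_fenchelConjugate [CompleteSpace H] {f : H → ℝ}
    {L a C : ℝ} (hL : 0 < L) (ha : 0 < a) (hsc : MidpointSemiconcave L f)
    (hlow : ∀ x, a * ‖x‖ ^ 2 - C ≤ f x) (hup : ∀ x, f x ≤ a * ‖x‖ ^ 2 + C) :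
    ∃ g : H → H, ∀ x y,
      fenchelConjugate (fenchelConjugate f) x + ⟪g x, y - x⟫ ≤
          fenchelConjugate (fenchelConjugate f) y ∧
        fenchelConjugate (fenchelConjugate f) y ≤
          fenchelConjugate (fenchelConjugate f) x + ⟪g x, y - x⟫ + L * ‖y - x‖ ^ 2 := by
  have hf := bddAbove_inner_sub_of_mul_norm_sq_sub_le ha hlow
  have hf' := bddAbove_inner_sub_fenchelConjugate hf
  have hconv := hsc.strongMidpointConvex_fenchelConjugate hL hf
  have hsemi : MidpointSemiconcave L (fenchelConjugate (fenchelConjugate f)) := by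
    simpa only [inv_inv] using
      hconv.midpointSemiconcave_fenchelConjugate (inv_pos.2 hL) hf'
  choose g hg using fun x => hconv.exists_fenchelConjugate_eq (inv_pos.2 hL)
    (lowerSemicontinuous_fenchelConjugate hf) (bddBelow_fenchelConjugate_sub_inner hf ha hup x)
  have hsub x y := fenchelConjugate_add_inner_le (hg x) (hf' y)
  exact ⟨g, fun x y => ⟨hsub x y, hsemi.le_add_inner_add (hsub x) y⟩⟩

theorem abs_sub_inner_sub_mul_norm_sq_le {P : H → ℝ} {g : H → H} {a L : ℝ} (ha : 0 ≤ a)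
    (haL : a ≤ L)
    (hP : ∀ x y, P x + ⟪g x, y - x⟫ ≤ P y ∧ P y ≤ P x + ⟪g x, y - x⟫ + L * ‖y - x‖ ^ 2)
    (x y : H) :
    |(P y - a * ‖y‖ ^ 2) - (P x - a * ‖x‖ ^ 2) - ⟪g x - (2 * a) • x, y - x⟫| ≤
      L * ‖y - x‖ ^ 2 := by
  have hsq := congrArg (a * ·) (norm_sub_sq_real y x)
  have haL' := mul_le_mul_of_nonneg_right haL (sq_nonneg ‖y - x‖)
  have ha' := mul_nonneg ha (sq_nonneg ‖y - x‖)
  obtain ⟨h₁, h₂⟩ := hP x y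
  simp only [inner_sub_left, inner_sub_right, real_inner_smul_left, real_inner_self_eq_norm_sq,
    real_inner_comm x y] at h₁ h₂ hsq ⊢
  rw [abs_le]
  constructor <;> linarith

section COneOne

variable {f : H → ℝ} {g : H → H} {L : ℝ}

theorem hasGradientAt_of_abs_sub_inner_le [CompleteSpace H]
    (h : ∀ x y, |f y - f x - ⟪g x, y - x⟫| ≤ L * ‖y - x‖ ^ 2) (x : H) :
    HasGradientAt f (g x) x := by
  rw [hasGradientAt_iff_isLittleO]
  refine (Asymptotics.IsBigO.of_bound L (Eventually.of_forall fun y => ?_)).trans_isLittleO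
    ((Asymptotics.isLittleO_norm_pow_id one_lt_two).comp_tendsto
      (tendsto_sub_nhds_zero_iff.2 tendsto_id))
  simpa using h x y

theorem lipschitzWith_of_abs_sub_inner_le (hL : 0 < L)
    (h : ∀ x y, |f y - f x - ⟪g x, y - x⟫| ≤ L * ‖y - x‖ ^ 2) :
    LipschitzWith (Real.toNNReal (6 * L)) g := by
  refine LipschitzWith.of_dist_le_mul fun y x => ?_
  rw [Real.coe_toNNReal _ (by positivity), dist_eq_norm, dist_eq_norm]
  set G := g y - g x
  set t := (6 * L)⁻¹ with ht_def
  have ht : 0 < t := by positivity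
  -- compare the expansions of `f` at `x` and at `y` in the point `y + t • G`; they give
  -- `t ‖G‖² ≤ 3L t² ‖G‖² + 3L ‖y - x‖²`, and `t = 1/(6L)` maximises `t - 3L t²`
  have h₁ := (abs_le.1 (h x (y + t • G))).2
  have h₂ := (abs_le.1 (h y (y + t • G))).1
  have h₃ := (abs_le.1 (h x y)).1
  rw [show y + t • G - x = (y - x) + t • G by abel] at h₁
  rw [add_sub_cancel_left] at h₂
  have hG : ⟪g y, G⟫ - ⟪g x, G⟫ = ‖G‖ ^ 2 := by
    rw [← inner_sub_left, real_inner_self_eq_norm_sq]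
  have hpar := parallelogram_law_with_norm ℝ (y - x) (t • G)
  simp only [inner_add_right, real_inner_smul_right, norm_smul, mul_pow,
    Real.norm_of_nonneg ht.le] at h₁ h₂ hpar
  have key : t * ‖G‖ ^ 2 ≤ L * (3 * (t ^ 2 * ‖G‖ ^ 2) + 3 * ‖y - x‖ ^ 2) := by
    nlinarith [sq_nonneg ‖y - x - t • G‖]
  have hLt : L * t = 6⁻¹ := by rw [ht_def]; field_simp
  have hsq : ‖G‖ ^ 2 ≤ (6 * L * ‖y - x‖) ^ 2 := by
    linear_combination 12 * L * key + 36 * ‖G‖ ^ 2 * (L * t - 6⁻¹) * hLt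
  exact (pow_le_pow_iff_left₀ (norm_nonneg _) (by positivity) two_ne_zero).1 hsq

theorem differentiable_and_lipschitzWith_gradient_of_abs_sub_inner_le [CompleteSpace H]
    (hL : 0 < L)
    (h : ∀ x y, |f y - f x - ⟪g x, y - x⟫| ≤ L * ‖y - x‖ ^ 2) :
    Differentiable ℝ f ∧ ∃ K : NNReal, LipschitzWith K (gradient f) := by
  have hgrad := hasGradientAt_of_abs_sub_inner_le h
  refine ⟨fun x => (hgrad x).differentiableAt, Real.toNNReal (6 * L), ?_⟩
  rw [show gradient f = g from funext fun x => (hgrad x).gradient]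
  exact lipschitzWith_of_abs_sub_inner_le hL h

end COneOne

section ConvexMinorant

variable {V : H → ℝ}

theorem ConvexOn.continuous_of_le_mul_norm_sq_add (hV : ConvexOn ℝ univ V) {a C : ℝ}
    (h : ∀ x, V x ≤ a * ‖x‖ ^ 2 + C) : Continuous V := by
  rw [← continuousOn_univ]
  refine ((hV.continuousOn_tfae isOpen_univ univ_nonempty).out 3 1).1 ?_
  refine ⟨0, mem_univ _, |a| + C, eventually_map.2 ?_⟩
  filter_upwards [Metric.ball_mem_nhds (0 : H) one_pos] with x hx
  have hx1 : ‖x‖ ^ 2 ≤ 1 := by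
    rw [mem_ball_zero_iff] at hx
    nlinarith [norm_nonneg x]
  have : a * ‖x‖ ^ 2 ≤ |a| :=
    (mul_le_mul_of_nonneg_right (le_abs_self a) (sq_nonneg _)).trans
      (mul_le_of_le_one_right (abs_nonneg a) hx1)
  linarith [h x]

theorem ConvexOn.add_inner_le_of_forall_le_add_mul_norm_sub_sq (hV : ConvexOn ℝ univ V) {τ : ℝ}
    {x₀ z : H} (hz : ∀ y, V z + τ * ‖z - x₀‖ ^ 2 ≤ V y + τ * ‖y - x₀‖ ^ 2) (y : H) :
    V z + ⟪(2 * τ) • (x₀ - z), y - z⟫ ≤ V y := by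
  set A := ⟪(2 * τ) • (x₀ - z), y - z⟫ with hA_def
  have hA : A = -(2 * τ * ⟪z - x₀, y - z⟫) := by
    rw [hA_def, real_inner_smul_left, ← neg_sub z x₀, inner_neg_left]
    ring
  have key : ∀ s ∈ Ioc (0 : ℝ) 1, A - s * (τ * ‖y - z‖ ^ 2) ≤ V y - V z := by
    rintro s ⟨hs₀, hs₁⟩
    have h₁ := hV.2 (mem_univ z) (mem_univ y) (sub_nonneg.2 hs₁) hs₀.le (sub_add_cancel 1 s)
    have h₂ := hz ((1 - s) • z + s • y)
    rw [show (1 - s) • z + s • y - x₀ = (z - x₀) + s • (y - z) by module, norm_add_sq_real,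
      real_inner_smul_right, norm_smul, mul_pow, Real.norm_of_nonneg hs₀.le] at h₂
    simp only [smul_eq_mul] at h₁
    have h : 0 ≤ s * (V y - V z - A + s * (τ * ‖y - z‖ ^ 2)) := by
      rw [hA]
      nlinarith
    linarith [(mul_nonneg_iff_of_pos_left hs₀).1 h]
  have hlim : Tendsto (fun s : ℝ => A - s * (τ * ‖y - z‖ ^ 2)) (𝓝[>] 0) (𝓝 A) := by
    have : Continuous fun s : ℝ => A - s * (τ * ‖y - z‖ ^ 2) := by fun_prop
    simpa using (this.tendsto 0).mono_left nhdsWithin_le_nhds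
  linarith [le_of_tendsto hlim (eventually_of_mem (Ioc_mem_nhdsGT one_pos) key)]

variable [CompleteSpace H]

theorem ConvexOn.exists_affine_le_of_continuous (hV : ConvexOn ℝ univ V) (hcont : Continuous V)
    (hbdd : BddBelow (range V)) (x₀ : H) {ε : ℝ} (hε : 0 < ε) :
    ∃ p c, (∀ y, ⟪p, y⟫ + c ≤ V y) ∧ V x₀ < ⟪p, x₀⟫ + c + ε := by
  obtain ⟨β, hβ⟩ := hbdd
  have hβ' : ∀ y, β ≤ V y := fun y => hβ ⟨y, rfl⟩
  obtain ⟨δ, hδ, hVδ⟩ := Metric.continuousAt_iff.1 hcont.continuousAt ε hε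
  -- a proximal point `z` of `x₀`, with a penalty steep enough to keep it `δ`-close to `x₀`
  set τ := (V x₀ - β + 1) / δ ^ 2 with hτ_def
  have hτ : 0 < τ := div_pos (by linarith [hβ' x₀]) (by positivity)
  have hbdd' : BddBelow (range fun y => V y + τ * ‖y - x₀‖ ^ 2) :=
    ⟨β, by rintro _ ⟨y, rfl⟩; nlinarith [hβ' y, sq_nonneg ‖y - x₀‖]⟩
  obtain ⟨z, hz⟩ := (hV.strongMidpointConvex_add_mul_norm_sub_sq τ x₀).exists_forall_le
    (by positivity) (hcont.add (by fun_prop)).lowerSemicontinuous hbdd'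
  have hzx₀ : dist z x₀ < δ := by
    have h := hz x₀
    simp only [sub_self, norm_zero] at h
    have hτδ : τ * δ ^ 2 = V x₀ - β + 1 := div_mul_cancel₀ _ (by positivity)
    have : τ * ‖z - x₀‖ ^ 2 < τ * δ ^ 2 := by nlinarith [hβ' z]
    rw [dist_eq_norm]
    exact lt_of_pow_lt_pow_left₀ 2 hδ.le (lt_of_mul_lt_mul_left this hτ.le)
  refine ⟨(2 * τ) • (x₀ - z), V z - ⟪(2 * τ) • (x₀ - z), z⟫, fun y => ?_, ?_⟩
  · have := hV.add_inner_le_of_forall_le_add_mul_norm_sub_sq hz y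
    rw [inner_sub_right] at this
    linarith
  · have h₁ := (abs_lt.1 (hVδ hzx₀)).1
    have h₂ : 0 ≤ ⟪(2 * τ) • (x₀ - z), x₀ - z⟫ := by
      rw [real_inner_smul_left, real_inner_self_eq_norm_sq]
      positivity
    rw [inner_sub_right] at h₂
    linarith

theorem ConvexOn.le_fenchelConjugate_fenchelConjugate {f : H → ℝ} (hV : ConvexOn ℝ univ V)
    (hcont : Continuous V) (hbdd : BddBelow (range V)) (hVf : ∀ x, V x ≤ f x)
    (hf : ∀ p, BddAbove (range fun x => ⟪p, x⟫ - f x)) (x : H) :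
    V x ≤ fenchelConjugate (fenchelConjugate f) x := by
  refine le_of_forall_pos_lt_add fun ε hε => ?_
  obtain ⟨p, c, hpc, hx⟩ := hV.exists_affine_le_of_continuous hcont hbdd x hε
  linarith [inner_add_le_fenchelConjugate_fenchelConjugate hf (fun y => (hpc y).trans (hVf y)) x]

end ConvexMinorant
end

theorem ilmanen_insertion {H : Type*} [NormedAddCommGroup H]
    [InnerProductSpace ℝ H] [CompleteSpace H]
    (u v : H → ℝ)
    (hu : ∃ C : ℝ, ∀ x, |u x| ≤ C) (hv : ∃ C : ℝ, ∀ x, |v x| ≤ C)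
    (huv : ∀ x, v x ≤ u x)
    (hu_sc : ∃ k : ℝ, 0 < k ∧ ConcaveOn ℝ Set.univ (fun x : H => u x - ‖x‖ ^ 2 / k))
    (hv_sc : ∃ k : ℝ, 0 < k ∧ ConcaveOn ℝ Set.univ (fun x : H => (-v x) - ‖x‖ ^ 2 / k)) :
    ∃ w : H → ℝ, (∀ x, v x ≤ w x ∧ w x ≤ u x) ∧
      Differentiable ℝ w ∧ ∃ K : NNReal, LipschitzWith K (fun x => gradient w x) := by
  obtain ⟨C₁, hC₁⟩ := hu
  obtain ⟨C₂, hC₂⟩ := hv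
  obtain ⟨k₁, hk₁, hu_sc⟩ := hu_sc
  obtain ⟨k₂, hk₂, hv_sc⟩ := hv_sc
  set a := k₂⁻¹
  have ha : 0 < a := inv_pos.2 hk₂
  have hV : ConvexOn ℝ univ fun x => v x + a * ‖x‖ ^ 2 := by
    refine hv_sc.neg.congr fun x _ => ?_
    simp only [Pi.neg_apply, a]
    ring
  have hlow x : a * ‖x‖ ^ 2 - C₁ ≤ u x + a * ‖x‖ ^ 2 := by linarith [neg_abs_le (u x), hC₁ x]
  have hup x : u x + a * ‖x‖ ^ 2 ≤ a * ‖x‖ ^ 2 + C₁ := by linarith [le_abs_self (u x), hC₁ x]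
  have hbdd := bddAbove_inner_sub_of_mul_norm_sq_sub_le ha hlow
  set P := fenchelConjugate (fenchelConjugate fun x => u x + a * ‖x‖ ^ 2)
  have hP_le : ∀ x, P x ≤ u x + a * ‖x‖ ^ 2 := fenchelConjugate_fenchelConjugate_le hbdd
  have hV_cont := hV.continuous_of_le_mul_norm_sq_add (C := C₂) fun x => by
    linarith [le_abs_self (v x), hC₂ x]
  have hV_bdd : BddBelow (range fun x => v x + a * ‖x‖ ^ 2) :=
    ⟨-C₂, by rintro _ ⟨x, rfl⟩; nlinarith [neg_abs_le (v x), hC₂ x, sq_nonneg ‖x‖]⟩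
  have hV_le : ∀ x, v x + a * ‖x‖ ^ 2 ≤ P x :=
    hV.le_fenchelConjugate_fenchelConjugate hV_cont hV_bdd (fun x => by linarith [huv x]) hbdd
  have hL : 0 < 2 / k₁ + 2 * a := by positivity
  obtain ⟨g, hg⟩ := exists_inner_bounds_fenchelConjugate_fenchelConjugate hL ha
    (hu_sc.midpointSemiconcave.add_mul_norm_sq a) hlow hup
  refine ⟨fun x => P x - a * ‖x‖ ^ 2, fun x => ⟨by linarith [hV_le x], by linarith [hP_le x]⟩, ?_⟩
  exact differentiable_and_lipschitzWith_gradient_of_abs_sub_inner_le hL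
    (abs_sub_inner_sub_mul_norm_sq_le ha.le (by linarith [div_pos two_pos hk₁]) hg)
end
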